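/- For every real α ≤ π/2, the function f_α(x) = (α + √(1−x²)) · (arcsin x)/x is strictly decreasing on (0, 1]. -/

import Mathlib

/-!
Substituting `x = sin θ` turns the function into `(α + cos θ) * θ / sin θ` on `(0, π / 2]`, whose
derivative has the sign of `(α + cos θ) * (sin θ - θ * cos θ) - θ * sin θ ^ 2`. As
`sin θ > θ * cos θ`, it suffices to treat `α = π / 2`, where the difference
`G θ = θ - sin θ * cos θ - π / 2 * (sin θ - θ * cos θ)` vanishes at both ends of `[0, π / 2]` and
has derivative `sin θ * (2 * sin θ - π / 2 * θ)`, which changes sign only once because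
`sin θ / θ` decreases (concavity of `sin`). Hence `G > 0` inside.
-/

open Real Set

lemma sin_div_self_strictAntiOn : StrictAntiOn (fun t => sin t / t) (Ioc 0 π) := by
  intro x hx y hy hxy
  have h0 : (0 : ℝ) ∈ Icc 0 π := left_mem_Icc.2 pi_pos.le
  simpa using strictConcaveOn_sin_Icc.secant_strict_mono h0 (Ioc_subset_Icc_self hx)
    (Ioc_subset_Icc_self hy) hx.1.ne' hy.1.ne' hxy

lemma mul_cos_lt_sin {t : ℝ} (h0 : 0 < t) (h1 : t < π / 2) : t * cos t < sin t := by
  have hcos : 0 < cos t := cos_pos_of_mem_Ioo ⟨by linarith, h1⟩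
  have := lt_tan h0 h1
  rwa [tan_eq_sin_div_cos, lt_div_iff₀ hcos] at this

lemma pi_div_two_add_cos_mul_sin_sub_mul_cos_lt {θ : ℝ} (h0 : 0 < θ) (h1 : θ < π / 2) :
    (π / 2 + cos θ) * (sin θ - θ * cos θ) < θ * sin θ ^ 2 := by
  set G : ℝ → ℝ := fun t => t - sin t * cos t - π / 2 * (sin t - t * cos t)
  have hG : ∀ t, HasDerivAt G (sin t * (2 * sin t - π / 2 * t)) t := by
    intro t
    refine (((hasDerivAt_id' t).sub ((hasDerivAt_sin t).mul (hasDerivAt_cos t))).sub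
      (((hasDerivAt_sin t).sub ((hasDerivAt_id' t).mul (hasDerivAt_cos t))).const_mul
        (π / 2))).congr_deriv ?_
    linear_combination -sin_sq_add_cos_sq t
  have hGc : Continuous G := by fun_prop
  suffices 0 < G θ by linear_combination this - θ * sin_sq_add_cos_sq θ
  have hsin_pos : ∀ t ∈ Ioo 0 (π / 2), 0 < sin t := fun t ht =>
    sin_pos_of_pos_of_lt_pi ht.1 (by linarith [ht.2])
  rcases le_or_gt (π / 4) (sin θ / θ) with hθ | hθ
  · have hmono : StrictMonoOn G (Icc 0 θ) := by
      refine strictMonoOn_of_deriv_pos (convex_Icc 0 θ) hGc.continuousOn fun t ht => ?_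
      rw [interior_Icc] at ht
      have hlt : π / 4 < sin t / t :=
        hθ.trans_lt (sin_div_self_strictAntiOn ⟨ht.1, by linarith [ht.2]⟩
          ⟨h0, by linarith⟩ ht.2)
      rw [lt_div_iff₀ ht.1] at hlt
      rw [(hG t).deriv]
      exact mul_pos (hsin_pos t ⟨ht.1, ht.2.trans h1⟩) (by linarith)
    simpa [G] using hmono (left_mem_Icc.2 h0.le) (right_mem_Icc.2 h0.le) h0
  · have hanti : StrictAntiOn G (Icc θ (π / 2)) := by
      refine strictAntiOn_of_deriv_neg (convex_Icc θ (π / 2)) hGc.continuousOn fun t ht => ?_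
      rw [interior_Icc] at ht
      have ht0 : 0 < t := h0.trans ht.1
      have hlt : sin t / t < π / 4 :=
        (sin_div_self_strictAntiOn ⟨h0, by linarith⟩ ⟨ht0, by linarith [ht.2]⟩ ht.1).trans hθ
      rw [div_lt_iff₀ ht0] at hlt
      rw [(hG t).deriv]
      exact mul_neg_of_pos_of_neg (hsin_pos t ⟨ht0, ht.2⟩) (by linarith)
    simpa [G] using hanti (left_mem_Icc.2 h1.le) (right_mem_Icc.2 h1.le) h1

lemma strictAntiOn_add_cos_mul_div_sin {α : ℝ} (hα : α ≤ π / 2) :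
    StrictAntiOn (fun θ => (α + cos θ) * θ / sin θ) (Ioc 0 (π / 2)) := by
  have hsin_pos : ∀ θ ∈ Ioc 0 (π / 2), 0 < sin θ := fun θ hθ =>
    sin_pos_of_pos_of_lt_pi hθ.1 (by linarith [hθ.2, pi_pos])
  refine strictAntiOn_of_deriv_neg (convex_Ioc 0 (π / 2))
    (by fun_prop (disch := exact fun θ hθ => (hsin_pos θ hθ).ne')) fun θ hθ => ?_
  rw [interior_Ioc] at hθ
  have hs := hsin_pos θ (Ioo_subset_Ioc_self hθ)
  have hderiv : HasDerivAt (fun θ => (α + cos θ) * θ / sin θ)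
      (((α + cos θ) * (sin θ - θ * cos θ) - θ * sin θ ^ 2) / sin θ ^ 2) θ := by
    refine ((((hasDerivAt_cos θ).const_add α).mul (hasDerivAt_id' θ)).div (hasDerivAt_sin θ)
      hs.ne').congr_deriv ?_
    simp only [Pi.mul_apply]
    field_simp
    ring
  rw [hderiv.deriv]
  refine div_neg_of_neg_of_pos ?_ (by positivity)
  have hα_le : (α + cos θ) * (sin θ - θ * cos θ) ≤ (π / 2 + cos θ) * (sin θ - θ * cos θ) :=
    mul_le_mul_of_nonneg_right (by linarith) (sub_nonneg.2 (mul_cos_lt_sin hθ.1 hθ.2).le)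
  linarith [pi_div_two_add_cos_mul_sin_sub_mul_cos_lt hθ.1 hθ.2]

theorem stmt_7 (α : ℝ) (hα : α ≤ Real.pi / 2) :
    StrictAntiOn (fun x : ℝ => (α + Real.sqrt (1 - x ^ 2)) * Real.arcsin x / x)
      (Set.Ioc 0 1) := by
  have hmaps : MapsTo arcsin (Ioc 0 1) (Ioc 0 (π / 2)) := fun x hx =>
    ⟨arcsin_pos.2 hx.1, arcsin_le_pi_div_two x⟩
  refine ((strictAntiOn_add_cos_mul_div_sin hα).comp_strictMonoOn
    (strictMonoOn_arcsin.mono fun x hx => ⟨by linarith [hx.1], hx.2⟩) hmaps).congr fun x hx => ?_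
  simp only [Function.comp, cos_arcsin, sin_arcsin (by linarith [hx.1]) hx.2]
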